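/- Chebyshev expansion of the DAHA action (key identity of Lemma 3.1): let S_m ∈ ℤ[u] be the Chebyshev polynomials of the second kind, S_0 = 1, S_1 = u, S_{m+1} = u S_m − S_{m−1}. Then for every n ≥ 1, evaluating S_{n−1} at the endomorphism 𝒴 + 𝒴′ and applying the result to U − U^{−1} gives S_{n−1}(𝒴 + 𝒴′)(U − U^{−1}) = ∑_{p=1}^{n} a_{n,p} (U^p − U^{−p}) in F[U,U^{−1}]. -/

import Mathlib

/- STATEMENT 4: Chebyshev expansion of the DAHA action (key identity of Lemma 3.1):
with S_m the Chebyshev polynomials of the second kind (S_0 = 1, S_1 = u,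
S_{m+1} = u S_m − S_{m−1}), for every n ≥ 1,
S_{n−1}(𝒴 + 𝒴′)(U − U^{−1}) = ∑_{p=1}^{n} a_{n,p} (U^p − U^{−p}) in F[U,U⁻¹]. -/

noncomputable section

open LaurentPolynomial

/-- The field `F = ℚ(q, t₁, t₂)` of rational functions in three indeterminates. -/
abbrev F : Type := FractionRing (MvPolynomial (Fin 3) ℚ)

def q : F := algebraMap (MvPolynomial (Fin 3) ℚ) F (MvPolynomial.X 0)
def t1 : F := algebraMap (MvPolynomial (Fin 3) ℚ) F (MvPolynomial.X 1)
def t2 : F := algebraMap (MvPolynomial (Fin 3) ℚ) F (MvPolynomial.X 2)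

/-- `a_k = (t̄₁ − t̄₂ q^{2k−1})/(1 − q^{4k−2})`. -/
def aop (k : ℤ) : F :=
  ((t1 - t1⁻¹) - (t2 - t2⁻¹) * q ^ (2 * k - 1)) / (1 - q ^ (4 * k - 2))

/-- `A_p = (q^{2p−1}t₁^{−1} − q^{1−2p}t₁ + t₂ − t₂^{−1})/(q^{2p−1} − q^{1−2p})`. -/
def A (p : ℤ) : F :=
  (q ^ (2 * p - 1) * t1⁻¹ - q ^ (1 - 2 * p) * t1 + t2 - t2⁻¹) /
    (q ^ (2 * p - 1) - q ^ (1 - 2 * p))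

/-- The coefficients `a_{n,p}` defined by the DAHA recurrence. -/
def a : ℕ → ℤ → F
  | 0, _ => 0
  | 1, p => if p = 1 then 1 else if p = -1 then -1 else 0
  | n + 2, p =>
      A p * a (n + 1) (p - 1) + (A p - A (p + 1)) * a (n + 1) p
        + A (-p) * a (n + 1) (p + 1) - a n p

/-- Chebyshev polynomials of the second kind: `S_0 = 1`, `S_1 = u`,
`S_{m+1} = u S_m − S_{m−1}`. -/
def S : ℕ → Polynomial ℤ
  | 0 => 1
  | 1 => Polynomial.X
  | m + 2 => Polynomial.X * S (m + 1) - S m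

/- On the vectors `v p := U^p − U^{−p}` the operator `𝒴 + 𝒴′` is tridiagonal,
`(𝒴 + 𝒴′) v p = A_{p+1} v (p+1) + (A_p − A_{p+1}) v p + A_{1−p} v (p−1)`,
once `𝒴 (U^k)` and `𝒴′ (U^k)` are rewritten through `A_p = t₁ − a_{1−p}` and
`A_p + A_{1−p} = t₁ + t₁⁻¹` (identities of rational functions, valid as `q` is not a root of
unity). So `(𝒴 + 𝒴′)` acts on coefficient vectors by the three-term rule defining `a_{n+1,·}`,
and `w_n := ∑_p a_{n,p} v p` satisfies the Chebyshev recurrence `w_{n+2} = (𝒴 + 𝒴′) w_{n+1} − w_n`.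
The boundary terms vanish because `a_{n,·}` is odd and `a_{n,p} = 0` for `p > n`. -/

open Finset

lemma sum_Icc_comp_add_right {M : Type*} [AddCommMonoid M] (f : ℤ → M) (a b c : ℤ) :
    ∑ p ∈ Icc a b, f (p + c) = ∑ p ∈ Icc (a + c) (b + c), f p := by
  rw [← map_add_right_Icc, sum_map]
  rfl

section Tridiagonal

variable {R M : Type*} [Ring R] [AddCommGroup M] [Module R M]

lemma map_sum_Icc_of_tridiagonal (D : Module.End R M) (v : ℤ → M) (α β γ : ℤ → R)
    (hv : v 0 = 0) (hD : ∀ p, D (v p) = α p • v (p + 1) + β p • v p + γ p • v (p - 1))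
    (c : ℤ → R) (N : ℤ) (hc₀ : c 0 = 0) (hc : ∀ p, N < p → c p = 0) :
    D (∑ p ∈ Icc 1 N, c p • v p) =
      ∑ p ∈ Icc 1 (N + 1), (c (p - 1) * α (p - 1) + c p * β p + c (p + 1) * γ (p + 1)) • v p := by
  have raise : ∑ p ∈ Icc 1 N, (c p * α p) • v (p + 1) =
      ∑ p ∈ Icc 1 (N + 1), (c (p - 1) * α (p - 1)) • v p := calc
    _ = ∑ p ∈ Icc (1 + 1) (N + 1), (c (p - 1) * α (p - 1)) • v p := by
      rw [← sum_Icc_comp_add_right]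
      simp only [add_sub_cancel_right]
    _ = _ := sum_subset (Icc_subset_Icc_left (by norm_num)) fun p hp hp' ↦ by
      obtain rfl : p = 1 := by simp only [mem_Icc] at hp hp'; omega
      rw [sub_self, hc₀, zero_mul, zero_smul]
  have keep : ∑ p ∈ Icc 1 N, (c p * β p) • v p = ∑ p ∈ Icc 1 (N + 1), (c p * β p) • v p :=
    sum_subset (Icc_subset_Icc_right (by omega)) fun p hp hp' ↦ by
      simp only [mem_Icc] at hp hp'
      rw [hc p (by omega), zero_mul, zero_smul]
  have lower : ∑ p ∈ Icc 1 N, (c p * γ p) • v (p - 1) =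
      ∑ p ∈ Icc 1 (N + 1), (c (p + 1) * γ (p + 1)) • v p := calc
    _ = ∑ p ∈ Icc (1 - 1) (N - 1), (c (p + 1) * γ (p + 1)) • v p := by
      rw [sub_eq_add_neg, sub_eq_add_neg, ← sum_Icc_comp_add_right]
      simp only [← sub_eq_add_neg, sub_add_cancel]
    _ = ∑ p ∈ Icc 0 (N + 1), (c (p + 1) * γ (p + 1)) • v p :=
      sum_subset (Icc_subset_Icc (by norm_num) (by omega)) fun p hp hp' ↦ by
        simp only [mem_Icc] at hp hp'
        rw [hc (p + 1) (by omega), zero_mul, zero_smul]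
    _ = _ := (sum_subset (Icc_subset_Icc_left zero_le_one) fun p hp hp' ↦ by
        obtain rfl : p = 0 := by simp only [mem_Icc] at hp hp'; omega
        rw [hv, smul_zero]).symm
  simp only [map_sum, map_smul, hD, smul_add, smul_smul, sum_add_distrib, raise, keep, lower]
  rw [← sum_add_distrib, ← sum_add_distrib]
  simp only [add_smul]

end Tridiagonal

lemma aeval_S_apply_eq_of_recurrence {R M : Type*} [Semiring R] [AddCommGroup M] [Module R M]
    (D : Module.End R M) (w : ℕ → M) (h₀ : w 0 = 0) (hw : ∀ n, w (n + 2) = D (w (n + 1)) - w n)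
    (m : ℕ) : Polynomial.aeval D (S m) (w 1) = w (m + 1) := by
  induction m using Nat.twoStepInduction with
  | zero => simp [S]
  | one => simp [S, hw 0, h₀]
  | more m ih₀ ih₁ =>
    simp only [S, map_sub, map_mul, Polynomial.aeval_X, LinearMap.sub_apply, Module.End.mul_apply,
      ih₀, ih₁, hw (m + 1)]

section FieldIdentities

variable {K : Type*} [Field K]

lemma inv_sub_self_ne_zero {w : K} (hw : w ≠ 0) (hw2 : 1 - w ^ 2 ≠ 0) : w⁻¹ - w ≠ 0 := by
  rw [show w⁻¹ - w = w⁻¹ * (1 - w ^ 2) by field_simp]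
  exact mul_ne_zero (inv_ne_zero hw) hw2

lemma div_sub_inv_eq_sub_div {s t c w : K} (hw : w ≠ 0) (hw2 : 1 - w ^ 2 ≠ 0) :
    (w⁻¹ * s - w * t + c) / (w⁻¹ - w) = t - ((t - s) - c * w) / (1 - w ^ 2) := by
  have := inv_sub_self_ne_zero hw hw2
  field_simp
  ring

lemma div_add_div_swap_inv {s t c w : K} (hw : w⁻¹ - w ≠ 0) :
    (w⁻¹ * s - w * t + c) / (w⁻¹ - w) + (w * s - w⁻¹ * t + c) / (w - w⁻¹) = s + t := by
  rw [← neg_sub w⁻¹ w, div_neg, ← sub_eq_add_neg, div_sub_div_same, div_eq_iff hw]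
  ring

end FieldIdentities

lemma q_ne_zero : q ≠ 0 :=
  (map_ne_zero_iff _ (IsFractionRing.injective _ F)).mpr (MvPolynomial.X_ne_zero 0)

lemma q_pow_ne_one {n : ℕ} (hn : n ≠ 0) : q ^ n ≠ 1 := by
  intro h
  have hX : (MvPolynomial.X 0 : MvPolynomial (Fin 3) ℚ) ^ n = 1 :=
    IsFractionRing.injective _ F (by simpa [q] using h)
  have h2 := congrArg (MvPolynomial.eval fun _ => (2 : ℚ)) hX
  simp only [map_pow, MvPolynomial.eval_X, map_one] at h2
  exact (one_lt_pow₀ one_lt_two hn).ne' h2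

lemma q_zpow_ne_one {m : ℤ} (hm : m ≠ 0) : q ^ m ≠ 1 := by
  have h := q_pow_ne_one (Int.natAbs_ne_zero.mpr hm)
  rcases Int.natAbs_eq m with hm' | hm' <;> rw [hm'] <;>
    simpa only [zpow_neg, zpow_natCast, ne_eq, inv_eq_one] using h

lemma one_sub_q_zpow_sq_ne_zero (p : ℤ) : 1 - (q ^ (1 - 2 * p)) ^ 2 ≠ 0 := by
  rw [sub_ne_zero, ne_comm, ← zpow_natCast, ← zpow_mul]
  exact q_zpow_ne_one (by omega)

lemma A_eq_sub_aop (p : ℤ) : A p = t1 - aop (1 - p) := by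
  have h := div_sub_inv_eq_sub_div (s := t1⁻¹) (t := t1) (c := t2 - t2⁻¹)
    (zpow_ne_zero (1 - 2 * p) q_ne_zero) (one_sub_q_zpow_sq_ne_zero p)
  rw [← zpow_neg, neg_sub, ← zpow_natCast, ← zpow_mul, Nat.cast_ofNat] at h
  rw [A, aop, show 2 * (1 - p) - 1 = 1 - 2 * p by ring,
    show 4 * (1 - p) - 2 = (1 - 2 * p) * 2 by ring, ← h]
  ring

lemma A_add_A_one_sub (p : ℤ) : A p + A (1 - p) = t1 + t1⁻¹ := by
  have h := div_add_div_swap_inv (s := t1⁻¹) (t := t1) (c := t2 - t2⁻¹)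
    (inv_sub_self_ne_zero (zpow_ne_zero (1 - 2 * p) q_ne_zero) (one_sub_q_zpow_sq_ne_zero p))
  rw [← zpow_neg, neg_sub] at h
  rw [A, A, show 2 * (1 - p) - 1 = 1 - 2 * p by ring, show 1 - 2 * (1 - p) = 2 * p - 1 by ring,
    add_comm t1, ← h]
  ring

lemma A_neg_sub_A_neg_add_one (p : ℤ) : A (-p) - A (-p + 1) = A p - A (p + 1) := by
  have h := A_add_A_one_sub (-p)
  rw [sub_neg_eq_add, add_comm 1 p] at h
  rw [neg_add_eq_sub]
  linear_combination h - A_add_A_one_sub p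

lemma a_neg (n : ℕ) (p : ℤ) : a n (-p) = -a n p := by
  induction n using Nat.twoStepInduction generalizing p with
  | zero => simp [a]
  | one => simp only [a]; split_ifs <;> first | omega | simp
  | more n ih₀ ih₁ =>
    have h₁ : a (n + 1) (-p - 1) = -a (n + 1) (p + 1) := by rw [← ih₁, neg_add']
    have h₂ : a (n + 1) (-p + 1) = -a (n + 1) (p - 1) := by rw [← ih₁, neg_sub, neg_add_eq_sub]
    simp only [a]
    rw [h₁, h₂, ih₁, ih₀, neg_neg]
    linear_combination (-a (n + 1) p) * A_neg_sub_A_neg_add_one p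

lemma a_apply_zero (n : ℕ) : a n 0 = 0 :=
  self_eq_neg.mp (by simpa using a_neg n 0)

lemma a_of_lt {n : ℕ} {p : ℤ} (h : (n : ℤ) < p) : a n p = 0 := by
  induction n using Nat.twoStepInduction generalizing p with
  | zero => rfl
  | one => simp only [a]; split_ifs <;> first | omega | rfl
  | more n ih₀ ih₁ =>
    push_cast at h
    simp only [a]
    rw [ih₀ (by omega), ih₁ (by omega), ih₁ (by omega), ih₁ (by omega)]
    ring

section DAHA

variable {Y Y' : Module.End F (LaurentPolynomial F)}
  (hY : ∀ k : ℤ, Y (T k) = t1 • T (k - 1) - aop k • (T (k - 1) + T (-k)))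
  (hY' : ∀ k : ℤ, Y' (T k) =
    t1 • T (k + 1) - aop (-k) • (T (k + 1) + T (-k)) + (t1 - t1⁻¹) • T (-k))
include hY hY'

lemma add_apply_T_sub_T_neg (p : ℤ) :
    (Y + Y') (T p - T (-p)) = A (p + 1) • (T (p + 1) - T (-(p + 1)))
      + (A p - A (p + 1)) • (T p - T (-p)) + A (1 - p) • (T (p - 1) - T (-(p - 1))) := by
  have h₁ : A (p + 1) = t1 - aop (-p) := by rw [A_eq_sub_aop, sub_add_cancel_right]
  have h₂ : A (1 - p) = t1 - aop p := by rw [A_eq_sub_aop, sub_sub_cancel]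
  have h₃ : A p - A (p + 1) = aop p + aop (-p) - (t1 - t1⁻¹) := by
    linear_combination A_add_A_one_sub p - h₂ - h₁
  rw [h₃, h₁, h₂, LinearMap.add_apply, map_sub, map_sub, hY, hY, hY', hY', neg_neg,
    neg_add', neg_sub', sub_neg_eq_add]
  simp only [smul_add, smul_sub, add_smul, sub_smul]
  abel

lemma sum_a_add_two (n : ℕ) :
    ∑ p ∈ Icc 1 ((n + 2 : ℕ) : ℤ), a (n + 2) p • (T p - T (-p)) =
      (Y + Y') (∑ p ∈ Icc 1 ((n + 1 : ℕ) : ℤ), a (n + 1) p • (T p - T (-p)))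
        - ∑ p ∈ Icc 1 (n : ℤ), a n p • (T p - T (-p)) := by
  rw [map_sum_Icc_of_tridiagonal (Y + Y') (fun p ↦ T p - T (-p)) (fun p ↦ A (p + 1))
    (fun p ↦ A p - A (p + 1)) (fun p ↦ A (1 - p)) (by simp) (add_apply_T_sub_T_neg hY hY')
    (a (n + 1)) _ (a_apply_zero _) fun p hp ↦ a_of_lt hp]
  have extend : ∑ p ∈ Icc 1 (n : ℤ), a n p • (T p - T (-p) : LaurentPolynomial F) =
      ∑ p ∈ Icc 1 ((n + 2 : ℕ) : ℤ), a n p • (T p - T (-p)) :=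
    sum_subset (Icc_subset_Icc_right (by omega)) fun p hp hp' ↦ by
      simp only [mem_Icc] at hp hp'
      rw [a_of_lt (by omega), zero_smul]
  rw [extend, show ((n + 1 : ℕ) : ℤ) + 1 = ((n + 2 : ℕ) : ℤ) by push_cast; ring,
    ← sum_sub_distrib]
  refine sum_congr rfl fun p _ ↦ ?_
  rw [← sub_smul, sub_add_cancel, sub_add_cancel_right, a]
  ring_nf

end DAHA

theorem chebyshev_expansion_of_DAHA_action
    (Y Y' : Module.End F (LaurentPolynomial F))
    (hY : ∀ k : ℤ, Y (T k) = t1 • T (k - 1) - aop k • (T (k - 1) + T (-k)))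
    (hY' : ∀ k : ℤ, Y' (T k) =
      t1 • T (k + 1) - aop (-k) • (T (k + 1) + T (-k)) + (t1 - t1⁻¹) • T (-k))
    (n : ℕ) (hn : 1 ≤ n) :
    (Polynomial.aeval (Y + Y') (S (n - 1))) (T 1 - T (-1)) =
      ∑ p ∈ Finset.Icc (1 : ℤ) (n : ℤ), a n p • (T p - T (-p)) := by
  obtain ⟨m, rfl⟩ : ∃ m, n = m + 1 := ⟨n - 1, by omega⟩
  have h₁ : ∑ p ∈ Icc 1 ((1 : ℕ) : ℤ), a 1 p • (T p - T (-p) : LaurentPolynomial F) =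
      T 1 - T (-1) := by
    simp [a]
  rw [Nat.add_sub_cancel, ← h₁]
  exact aeval_S_apply_eq_of_recurrence (Y + Y')
    (fun n ↦ ∑ p ∈ Icc (1 : ℤ) n, a n p • (T p - T (-p))) (by simp) (sum_a_add_two hY hY') m

end
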